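/- arXiv:2209.06655 — 2 statements merged into one kernel-verified Lean document; each statement's English description precedes it below -/
import Mathlib

section
/- For every L_MO-formula φ(X₁,…,Xₙ) there exists an L_MO-formula ψ(X₁,…,Xₙ) such that for every tuple Ā = (A₁,…,Aₙ) of finite subsets of 𝕀: WSO(𝕀) ⊨ φ(Ā) if and only if MSO(⌊Ā⌋) ⊨ ψ(Ā), where ⌊Ā⌋ = {0} ∪ A₁ ∪ … ∪ Aₙ is viewed as a finite suborder of 𝕀 and MSO(⌊Ā⌋) is the L_MO-structure on its powerset. -/
namespace MCpaper

open FirstOrder Language Structure Set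

/-- `𝕀`: a dense linear order with a least element `0` and no greatest element,
concretely the nonnegative rationals. -/
abbrev II : Type := NNRat

/-! ### Set-level operations associated to a linear order -/

section SetOps

variable {α : Type*} [LinearOrder α]

/-- The singleton of the least element of `A` (as a set; empty if `A` has no least element). -/
def minSet (A : Set α) : Set α := {i ∈ A | ∀ j ∈ A, i ≤ j}

/-- The singleton of the greatest element of `A` (as a set; empty if `A` has no greatest
element). -/
def maxSet (A : Set α) : Set α := {i ∈ A | ∀ j ∈ A, j ≤ i}

/-- `sInvSet A B = {i ∈ A : i has a successor in the suborder A and that successor lies in B}`. -/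
def sInvSet (A B : Set α) : Set α :=
  {i ∈ A | ∃ j ∈ A, i < j ∧ (∀ k ∈ A, i < k → j ≤ k) ∧ j ∈ B}

lemma minSet_subset (A : Set α) : minSet A ⊆ A := sep_subset _ _

lemma minSet_subsingleton (A : Set α) : (minSet A).Subsingleton :=
  fun x hx y hy => le_antisymm (hx.2 y hy.1) (hy.2 x hx.1)

lemma maxSet_subsingleton (A : Set α) : (maxSet A).Subsingleton :=
  fun x hx y hy => le_antisymm (hy.2 x hx.1) (hx.2 y hy.1)
lemma maxSet_subset (A : Set α) : maxSet A ⊆ A := sep_subset _ _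
lemma sInvSet_subset (A B : Set α) : sInvSet A B ⊆ A := sep_subset _ _

end SetOps

/-! ### The languages -/

/-- Relation symbols of `L_MO = {⊆, ∃<}`. -/
inductive MORel : ℕ → Type
  | sub : MORel 2
  | elt : MORel 2

/-- The language `L_MO = {⊆, ∃<}` with two binary relation symbols. -/
def LMO : Language := ⟨fun _ => Empty, MORel⟩

/-- Function symbols of `L_WSO`. -/
inductive WSOFunc : ℕ → Type
  | union : WSOFunc 2
  | inter : WSOFunc 2
  | bot : WSOFunc 0
  | zero : WSOFunc 0
  | min : WSOFunc 1
  | max : WSOFunc 1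
  | sinv : WSOFunc 2

/-- The language `L_WSO = {∪, ∩, ⊥, 𝟎, min, max, 𝔰⁻¹}`. -/
def LWSO : Language := ⟨WSOFunc, fun _ => Empty⟩

/-- Function symbols of `L_MSOFin`. -/
inductive MSOFinFunc : ℕ → Type
  | union : MSOFinFunc 2
  | inter : MSOFinFunc 2
  | bot : MSOFinFunc 0
  | zero : MSOFinFunc 0
  | zeroStar : MSOFinFunc 0
  | sinv : MSOFinFunc 1

/-- The language `L_MSOFin = {∪, ∩, ⊥, 𝟎, 𝟎*, s⁻¹}`. -/
def LMSOFin : Language := ⟨MSOFinFunc, fun _ => Empty⟩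

/-- Function symbols of `L_L`. -/
inductive LLFunc : ℕ → Type
  | union : LLFunc 2
  | inter : LLFunc 2
  | bot : LLFunc 0
  | zero : LLFunc 0
  | min : LLFunc 1
  | max : LLFunc 1
  | left : LLFunc 1
  | right : LLFunc 1

/-- The language `L_L = {∪, ∩, ⊥, 𝟎, min, max, l, r}`. -/
def LL : Language := ⟨LLFunc, fun _ => Empty⟩

/-! ### `WSO(𝕀)` as an `L_WSO`-structure and as an `L_MO`-structure -/

/-- The universe of `WSO(𝕀)`: finite subsets of `𝕀`. -/
abbrev FinSub : Type := {A : Set II // A.Finite}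

/-- `WSO(𝕀)` as an `L_WSO`-structure. -/
instance finSubLWSO : LWSO.Structure FinSub where
  funMap {n} f :=
    match f with
    | .union => fun v => ⟨(v 0).1 ∪ (v 1).1, (v 0).2.union (v 1).2⟩
    | .inter => fun v => ⟨(v 0).1 ∩ (v 1).1, (v 0).2.inter_of_left _⟩
    | .bot => fun _ => ⟨∅, finite_empty⟩
    | .zero => fun _ => ⟨{0}, finite_singleton _⟩
    | .min => fun v => ⟨minSet (v 0).1, (v 0).2.subset (minSet_subset _)⟩
    | .max => fun v => ⟨maxSet (v 0).1, (v 0).2.subset (maxSet_subset _)⟩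
    | .sinv => fun v => ⟨sInvSet (v 0).1 (v 1).1, (v 0).2.subset (sInvSet_subset _ _)⟩
  RelMap {n} r := Empty.elim r

/-- `WSO(α)` as an `L_MO`-structure, for any linearly ordered `α` (here specialised to `𝕀`). -/
instance finSubLMO : LMO.Structure FinSub where
  funMap {n} f := Empty.elim f
  RelMap {n} r :=
    match r with
    | .sub => fun v => (v 0).1 ⊆ (v 1).1
    | .elt => fun v => ∃ a ∈ (v 0).1, ∃ b ∈ (v 1).1, a < b

/-- `MSO(α)`: the `L_MO`-structure on the full powerset of a linear order `α`. -/
instance powersetLMO (α : Type*) [LinearOrder α] : LMO.Structure (Set α) where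
  funMap {n} f := Empty.elim f
  RelMap {n} r :=
    match r with
    | .sub => fun v => v 0 ⊆ v 1
    | .elt => fun v => ∃ a ∈ v 0, ∃ b ∈ v 1, a < b

/-! ### `MSO(n)` and the pseudofinite theory `T_MSOFin` -/

/-- `MSO(n)` as an `L_MSOFin`-structure on the powerset of `{0, …, n-1}`. -/
instance msoFinStructure (n : ℕ) : LMSOFin.Structure (Set (Fin n)) where
  funMap {m} f :=
    match f with
    | .union => fun v => v 0 ∪ v 1
    | .inter => fun v => v 0 ∩ v 1
    | .bot => fun _ => ∅
    | .zero => fun _ => {i : Fin n | (i : ℕ) = 0}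
    | .zeroStar => fun _ => {i : Fin n | (i : ℕ) = n - 1}
    | .sinv => fun v => {i : Fin n | ∃ j : Fin n, (j : ℕ) = (i : ℕ) + 1 ∧ j ∈ v 0}
  RelMap {m} r := Empty.elim r

/-- The pseudofinite monadic second order theory of linear order: the set of `L_MSOFin`-sentences
true in `MSO(n)` for every `n`. -/
def TMSOFin : LMSOFin.Theory := {φ : LMSOFin.Sentence | ∀ n : ℕ, Set (Fin n) ⊨ φ}

/-! ### Abstract `L_MO`-structures: atoms and interval restrictions -/

section LMOAbstract

variable {M : Type*} [LMO.Structure M]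

/-- The interpretation of `⊆` in an `L_MO`-structure. -/
def mSub (a b : M) : Prop := RelMap (L := LMO) MORel.sub ![a, b]

/-- The interpretation of `∃<` in an `L_MO`-structure. -/
def mLt (a b : M) : Prop := RelMap (L := LMO) MORel.elt ![a, b]

/-- `b` is the least element of the partial order `(M, ⊆)`. -/
def IsBotM (b : M) : Prop := ∀ x : M, mSub b x

/-- `a` is an atom of `(M, ⊆)`: a minimal element strictly above the least element. -/
def IsAtomM (a : M) : Prop :=
  ∃ b : M, IsBotM b ∧ a ≠ b ∧ ∀ x : M, mSub x a → x = a ∨ x = b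

/-- The carrier `{B : M ∣ every atom X ⊆ B satisfies (i ∃< X ∨ X = i) ∧ X ∃< j}`
of the restriction `M ↾ [i,j)`. -/
def intervalRes (i j : M) : Set M :=
  {B : M | ∀ X : M, IsAtomM X → mSub X B → (mLt i X ∨ X = i) ∧ mLt X j}

/-- The `L_MO`-structure induced on a subset of an `L_MO`-structure. -/
def inducedLMO (s : Set M) : LMO.Structure s where
  funMap {n} f := Empty.elim f
  RelMap {n} r v := RelMap (M := M) r fun k => (v k : M)

end LMOAbstract

/-! ### Abstract `L_WSO`-structures, restrictions to elements -/

section LWSOAbstract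

variable {M : Type*} [LWSO.Structure M]

/-- The interpretation of `∪` in an `L_WSO`-structure. -/
def wUnion (a b : M) : M := funMap (L := LWSO) WSOFunc.union ![a, b]

/-- The interpretation of `∩` in an `L_WSO`-structure. -/
def wInter (a b : M) : M := funMap (L := LWSO) WSOFunc.inter ![a, b]

/-- The interpretation of `⊥` in an `L_WSO`-structure. -/
def wBot : M := funMap (L := LWSO) (M := M) WSOFunc.bot ![]

/-- The interpretation of `𝟎` in an `L_WSO`-structure. -/
def wZero : M := funMap (L := LWSO) (M := M) WSOFunc.zero ![]

/-- The interpretation of `min` in an `L_WSO`-structure. -/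
def wMin (a : M) : M := funMap (L := LWSO) WSOFunc.min ![a]

/-- The interpretation of `max` in an `L_WSO`-structure. -/
def wMax (a : M) : M := funMap (L := LWSO) WSOFunc.max ![a]

/-- The interpretation of `𝔰⁻¹` in an `L_WSO`-structure. -/
def wSInv (a b : M) : M := funMap (L := LWSO) WSOFunc.sinv ![a, b]

variable (M)

/-- The universe `{B : M ∣ B ∩ A = B}` of the restriction `M ↾ A`. -/
def Res (A : M) : Type _ := {B : M // wInter B A = B}

/-- The (true in every model of `Th(WSO(𝕀))`) closure conditions saying that
`{B : M ∣ B ∩ A = B}` is closed under the operations of the restricted structure `M ↾ A`. -/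
structure ResClosed (A : M) : Prop where
  union : ∀ B C : M, wInter B A = B → wInter C A = C → wInter (wUnion B C) A = wUnion B C
  inter : ∀ B C : M, wInter B A = B → wInter C A = C → wInter (wInter B C) A = wInter B C
  bot : wInter (wBot : M) A = wBot
  zero : wInter (wMin A) A = wMin A
  zeroStar : wInter (wMax A) A = wMax A
  sinv : ∀ B : M, wInter B A = B → wInter (wSInv A B) A = wSInv A B

variable {M}

/-- The restriction `M ↾ A` as an `L_MSOFin`-structure: `∪`, `∩`, `⊥` are inherited from `M`,
`𝟎` is `min(A)`, `𝟎*` is `max(A)`, and `s⁻¹` is `B ↦ 𝔰⁻¹(A, B)` computed in `M`. -/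
def resStructure {A : M} (hc : ResClosed M A) : LMSOFin.Structure (Res M A) where
  funMap {m} f :=
    match f with
    | .union => fun v => ⟨wUnion (v 0).1 (v 1).1, hc.union _ _ (v 0).2 (v 1).2⟩
    | .inter => fun v => ⟨wInter (v 0).1 (v 1).1, hc.inter _ _ (v 0).2 (v 1).2⟩
    | .bot => fun _ => ⟨wBot, hc.bot⟩
    | .zero => fun _ => ⟨wMin A, hc.zero⟩
    | .zeroStar => fun _ => ⟨wMax A, hc.zeroStar⟩
    | .sinv => fun v => ⟨wSInv A (v 0).1, hc.sinv _ (v 0).2⟩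
  RelMap {m} r := Empty.elim r

/-- `⌊Ā⌋ = 𝟎 ∪ A₁ ∪ … ∪ Aₙ`, computed in `M`. -/
def wFloor {n : ℕ} (A : Fin n → M) : M := (List.ofFn A).foldl wUnion wZero

end LWSOAbstract

/-! ### Complexity classes of formulas -/

section Complexity

variable {L : Language} {α : Type*}

/-- Positive existential formulas: those built from atomic formulas using only `∧`, `∨`
and `∃`. -/
inductive IsPosEx : {n : ℕ} → L.BoundedFormula α n → Prop
  | equal {n} (t₁ t₂ : L.Term (α ⊕ Fin n)) : IsPosEx (BoundedFormula.equal t₁ t₂)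
  | rel {n k} (R : L.Relations k) (ts : Fin k → L.Term (α ⊕ Fin n)) :
      IsPosEx (BoundedFormula.rel R ts)
  | inf {n} {φ ψ : L.BoundedFormula α n} : IsPosEx φ → IsPosEx ψ → IsPosEx (φ ⊓ ψ)
  | sup {n} {φ ψ : L.BoundedFormula α n} : IsPosEx φ → IsPosEx ψ → IsPosEx (φ ⊔ ψ)
  | ex {n} {φ : L.BoundedFormula α (n + 1)} : IsPosEx φ → IsPosEx φ.ex

/-- Existential formulas: a block of existential quantifiers applied to a
quantifier-free formula. -/
inductive IsExist : {n : ℕ} → L.BoundedFormula α n → Prop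
  | of_isQF {n} {φ : L.BoundedFormula α n} : φ.IsQF → IsExist φ
  | ex {n} {φ : L.BoundedFormula α (n + 1)} : IsExist φ → IsExist φ.ex

end Complexity

/-! ### Finite unions of closed intervals and the structure `L(𝕀)` -/

/-- `A` is a finite union of closed intervals of `𝕀` (each of the form `[i,j]` or `[i,∞)`;
intervals of the form `(-∞, j]` coincide with `[0, j]` since `𝕀` has least element `0`). -/
def IsFCI (A : Set II) : Prop :=
  ∃ (k : ℕ) (f : Fin k → Set II),
    (∀ m : Fin k, (∃ i j : II, f m = Set.Icc i j) ∨ ∃ i : II, f m = Set.Ici i) ∧ A = ⋃ m, f m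

/-- The universe of `L(𝕀)`: finite unions of closed intervals of `𝕀`. -/
abbrev FCI : Type := {A : Set II // IsFCI A}

/-- The set of left endpoints of `A`. -/
def lSet (A : Set II) : Set II := {i ∈ A | i = 0 ∨ ∃ i' < i, Set.Ioo i' i ∩ A = ∅}

/-- The set of right endpoints of `A`. -/
def rSet (A : Set II) : Set II := {i ∈ A | ∃ i'', i < i'' ∧ Set.Ioo i i'' ∩ A = ∅}

lemma isFCI_empty : IsFCI (∅ : Set II) := ⟨0, Fin.elim0, fun m => m.elim0, by simp⟩

lemma isFCI_singleton (i : II) : IsFCI {i} :=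
  ⟨1, fun _ => Set.Icc i i, fun _ => Or.inl ⟨i, i, rfl⟩, by simp⟩

lemma IsFCI.union {A B : Set II} (hA : IsFCI A) (hB : IsFCI B) : IsFCI (A ∪ B) := by
  obtain ⟨k, f, hf, rfl⟩ := hA
  obtain ⟨l, g, hg, rfl⟩ := hB
  refine ⟨k + l, fun m => Sum.elim f g (finSumFinEquiv.symm m), fun m => ?_, ?_⟩
  · dsimp only
    rcases finSumFinEquiv.symm m with i | j
    · exact hf i
    · exact hg j
  · ext x
    simp only [Set.mem_union, Set.mem_iUnion]
    constructor
    · rintro (⟨i, hi⟩ | ⟨j, hj⟩)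
      · exact ⟨finSumFinEquiv (Sum.inl i), by simpa using hi⟩
      · exact ⟨finSumFinEquiv (Sum.inr j), by simpa using hj⟩
    · rintro ⟨m, hm⟩
      rcases h : finSumFinEquiv.symm m with i | j
      · rw [h] at hm; exact Or.inl ⟨i, hm⟩
      · rw [h] at hm; exact Or.inr ⟨j, hm⟩

lemma Icc_inter_Ici' {a b c : II} : Set.Icc a b ∩ Set.Ici c = Set.Icc (a ⊔ c) b := by
  ext x
  simp only [Set.mem_inter_iff, Set.mem_Icc, Set.mem_Ici, sup_le_iff]
  tauto

lemma IsFCI.inter {A B : Set II} (hA : IsFCI A) (hB : IsFCI B) : IsFCI (A ∩ B) := by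
  obtain ⟨k, f, hf, rfl⟩ := hA
  obtain ⟨l, g, hg, rfl⟩ := hB
  refine ⟨k * l, fun m => f (finProdFinEquiv.symm m).1 ∩ g (finProdFinEquiv.symm m).2,
    fun m => ?_, ?_⟩
  · dsimp only
    rcases hf (finProdFinEquiv.symm m).1 with ⟨a, b, hab⟩ | ⟨a, ha⟩ <;>
      rcases hg (finProdFinEquiv.symm m).2 with ⟨c, d, hcd⟩ | ⟨c, hc⟩
    · exact Or.inl ⟨a ⊔ c, b ⊓ d, by rw [hab, hcd, Set.Icc_inter_Icc]⟩
    · exact Or.inl ⟨a ⊔ c, b, by rw [hab, hc, Icc_inter_Ici']⟩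
    · exact Or.inl ⟨c ⊔ a, d, by rw [ha, hcd, Set.inter_comm, Icc_inter_Ici']⟩
    · exact Or.inr ⟨a ⊔ c, by rw [ha, hc, Set.Ici_inter_Ici]⟩
  · ext x
    simp only [Set.mem_inter_iff, Set.mem_iUnion]
    constructor
    · rintro ⟨⟨i, hi⟩, ⟨j, hj⟩⟩
      exact ⟨finProdFinEquiv (i, j), by simpa using ⟨hi, hj⟩⟩
    · rintro ⟨m, hm⟩
      exact ⟨⟨_, hm.1⟩, ⟨_, hm.2⟩⟩

lemma isFCI_minSet (A : Set II) : IsFCI (minSet A) := by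
  rcases (minSet_subsingleton A).eq_empty_or_singleton with h | ⟨i, h⟩
  · rw [h]; exact isFCI_empty
  · rw [h]; exact isFCI_singleton i

lemma isFCI_maxSet (A : Set II) : IsFCI (maxSet A) := by
  rcases (maxSet_subsingleton A).eq_empty_or_singleton with h | ⟨i, h⟩
  · rw [h]; exact isFCI_empty
  · rw [h]; exact isFCI_singleton i

lemma finite_isFCI {A : Set II} (hA : A.Finite) : IsFCI A :=
  Set.Finite.induction_on (motive := fun s _ => IsFCI s) A hA isFCI_empty
    (fun _ _ ih => by rw [Set.insert_eq]; exact (isFCI_singleton _).union ih)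

lemma IsFCI.lSet_finite {A : Set II} (hA : IsFCI A) : (lSet A).Finite := by
  obtain ⟨k, f, hf, rfl⟩ := hA
  have hsub : lSet (⋃ m, f m) ⊆ {0} ∪ ⋃ m, minSet (f m) := by
    rintro i ⟨hiA, hi⟩
    rcases hi with rfl | ⟨i', hi'lt, hgap⟩
    · exact Set.mem_union_left _ rfl
    · obtain ⟨m, him⟩ := Set.mem_iUnion.1 hiA
      refine Set.mem_union_right _ (Set.mem_iUnion.2 ⟨m, him, fun j hj => ?_⟩)
      by_contra hji
      push_neg at hji
      obtain ⟨x, hx1, hx2⟩ := exists_between (max_lt hi'lt hji : max i' j < i)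
      have hxfm : x ∈ f m := by
        rcases hf m with ⟨a, b, hab⟩ | ⟨a, ha⟩
        · rw [hab] at him hj ⊢
          exact ⟨hj.1.trans ((le_max_right i' j).trans hx1.le), hx2.le.trans him.2⟩
        · rw [ha] at hj ⊢
          exact hj.trans ((le_max_right i' j).trans hx1.le)
      have hmem : x ∈ Set.Ioo i' i ∩ ⋃ m, f m :=
        ⟨⟨(le_max_left i' j).trans_lt hx1, hx2⟩, Set.mem_iUnion.2 ⟨m, hxfm⟩⟩
      rw [hgap] at hmem
      exact hmem
  exact ((Set.finite_singleton 0).union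
    (Set.finite_iUnion fun m => (minSet_subsingleton (f m)).finite)).subset hsub

lemma IsFCI.rSet_finite {A : Set II} (hA : IsFCI A) : (rSet A).Finite := by
  obtain ⟨k, f, hf, rfl⟩ := hA
  have hsub : rSet (⋃ m, f m) ⊆ ⋃ m, maxSet (f m) := by
    rintro i ⟨hiA, i'', hi''gt, hgap⟩
    obtain ⟨m, him⟩ := Set.mem_iUnion.1 hiA
    refine Set.mem_iUnion.2 ⟨m, him, fun j hj => ?_⟩
    by_contra hij
    push_neg at hij
    obtain ⟨x, hx1, hx2⟩ := exists_between (lt_min hi''gt hij : i < min i'' j)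
    have hxfm : x ∈ f m := by
      rcases hf m with ⟨a, b, hab⟩ | ⟨a, ha⟩
      · rw [hab] at him hj ⊢
        exact ⟨him.1.trans hx1.le, (hx2.le.trans (min_le_right i'' j)).trans hj.2⟩
      · rw [ha] at him ⊢
        exact him.trans hx1.le
    have hmem : x ∈ Set.Ioo i i'' ∩ ⋃ m, f m :=
      ⟨⟨hx1, hx2.trans_le (min_le_left i'' j)⟩, Set.mem_iUnion.2 ⟨m, hxfm⟩⟩
    rw [hgap] at hmem
    exact hmem
  exact (Set.finite_iUnion fun m => (maxSet_subsingleton (f m)).finite).subset hsub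

/-- `L(𝕀)` as an `L_L`-structure. -/
instance fciLL : LL.Structure FCI where
  funMap {m} f :=
    match f with
    | .union => fun v => ⟨(v 0).1 ∪ (v 1).1, (v 0).2.union (v 1).2⟩
    | .inter => fun v => ⟨(v 0).1 ∩ (v 1).1, (v 0).2.inter (v 1).2⟩
    | .bot => fun _ => ⟨∅, isFCI_empty⟩
    | .zero => fun _ => ⟨{0}, isFCI_singleton 0⟩
    | .min => fun v => ⟨minSet (v 0).1, isFCI_minSet _⟩
    | .max => fun v => ⟨maxSet (v 0).1, isFCI_maxSet _⟩
    | .left => fun v => ⟨lSet (v 0).1, finite_isFCI (v 0).2.lSet_finite⟩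
    | .right => fun v => ⟨rSet (v 0).1, finite_isFCI (v 0).2.rSet_finite⟩
  RelMap {m} r := Empty.elim r

universe u v

/-- `⌊Ā⌋ = {0} ∪ A₁ ∪ … ∪ Aₙ`, as a subset of `𝕀`. -/
def floorSet {n : ℕ} (A : Fin n → FinSub) : Set II := {0} ∪ ⋃ i, (A i).1

/-!
Let `F = ⌊Ā⌋`. The points of `F` cut `𝕀` into blocks `[g, g⁺)`, each a point of `F` followed
by an open gap, and a finite set is determined by its trace on `F` together with its parts in the
gaps; `⊆` and `∃<` between finite sets decompose accordingly. By induction on formulas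
(a Feferman–Vaught composition argument), a formula of quantifier rank `r` about finite sets is
equivalent, uniformly in `F`, to an `MSO(F)`-formula about their traces and the sets of points of
`F` whose gap carries a given rank-`r` color. A color is a finite invariant: the atomic type of the
parts in the gap together with, recursively, the colors reachable by adding one more finite set,
so quantifying over a finite set amounts to choosing a trace and, gap by gap, a reachable color.
For `Ā` itself all gap parts are empty, and all gaps are countable dense orders without endpoints,
hence isomorphic by Cantor's theorem: every gap has the same color, and it remains to substitute
`univ` and `∅` for the color classes.
-/
noncomputable section

section Gaps

variable {α : Type*} [LinearOrder α] {F : Set α} {g h x y : α}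

def gap (F : Set α) (g : α) : Set α := {x | g < x ∧ ∀ f ∈ F, g < f → x < f}

def block (F : Set α) (g : α) : Set α := insert g (gap F g)

lemma notMem_of_mem_gap (hx : x ∈ gap F g) : x ∉ F := fun hxF => (hx.2 x hxF hx.1).false

lemma eq_of_mem_gap_of_mem_gap (hg : g ∈ F) (hh : h ∈ F) (hxg : x ∈ gap F g) (hxh : x ∈ gap F h) :
    g = h := by
  by_contra hne
  rcases lt_or_gt_of_ne hne with hlt | hlt
  · exact (hxg.2 h hh hlt).asymm hxh.1
  · exact (hxh.2 g hg hlt).asymm hxg.1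

lemma le_of_mem_block (hx : x ∈ block F g) : g ≤ x := by
  rcases hx with rfl | hx
  exacts [le_rfl, hx.1.le]

lemma lt_of_mem_block (hx : x ∈ block F g) (hh : h ∈ F) (hgh : g < h) : x < h := by
  rcases hx with rfl | hx
  exacts [hgh, hx.2 h hh hgh]

lemma le_of_mem_block_of_lt (hg : g ∈ F) (hx : x ∈ block F g) (hy : y ∈ block F h) (hxy : x < y) :
    g ≤ h :=
  not_lt.1 fun hhg => (lt_of_mem_block hy hg hhg).asymm (hxy.trans_le' (le_of_mem_block hx))

lemma exists_mem_block [OrderBot α] (hF : F.Finite) (h0 : ⊥ ∈ F) (x : α) :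
    ∃ g ∈ F, x ∈ block F g := by
  obtain ⟨g, ⟨hgF, hgx⟩, hmax⟩ :=
    exists_max_image {f ∈ F | f ≤ x} id (hF.subset (sep_subset _ _)) ⟨⊥, h0, bot_le⟩
  refine ⟨g, hgF, ?_⟩
  rcases hgx.eq_or_lt with rfl | hgx
  · exact mem_insert _ _
  · exact Or.inr ⟨hgx, fun f hf hgf => not_le.1 fun hfx => (hmax f ⟨hf, hfx⟩).not_gt hgf⟩

lemma inter_block_nonempty_iff {B : Set α} :
    (B ∩ block F g).Nonempty ↔ g ∈ B ∨ (B ∩ gap F g).Nonempty := by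
  simp only [block, Set.Nonempty, mem_inter_iff, mem_insert_iff]
  constructor
  · rintro ⟨x, hxB, rfl | hx⟩
    exacts [Or.inl hxB, Or.inr ⟨x, hxB, hx⟩]
  · rintro (hg | ⟨x, hxB, hx⟩)
    exacts [⟨g, hg, Or.inl rfl⟩, ⟨x, hxB, Or.inr hx⟩]

section DenseGaps

variable [DenselyOrdered α] [NoMaxOrder α]

lemma exists_gt_forall_lt_of_finite {S : Set α} (hS : S.Finite) (h : ∀ s ∈ S, x < s) :
    ∃ y, x < y ∧ ∀ s ∈ S, y < s := by
  rcases S.eq_empty_or_nonempty with rfl | hne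
  · simpa using exists_gt x
  · obtain ⟨y, hxy, hy⟩ := (finite_singleton x).exists_between (singleton_nonempty x) hS hne
      fun _ hx => hx ▸ h
    exact ⟨y, hxy x rfl, hy⟩

instance : DenselyOrdered (gap F g) :=
  ⟨fun x z hxz => by
    obtain ⟨y, hxy, hyz⟩ := exists_between (Subtype.coe_lt_coe.2 hxz)
    exact ⟨⟨y, x.2.1.trans hxy, fun f hf hgf => hyz.trans (z.2.2 f hf hgf)⟩, hxy, hyz⟩⟩

instance : NoMinOrder (gap F g) :=
  ⟨fun x => by
    obtain ⟨y, hgy, hyx⟩ := exists_between x.2.1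
    exact ⟨⟨y, hgy, fun f hf hgf => hyx.trans (x.2.2 f hf hgf)⟩, hyx⟩⟩

lemma exists_mem_gap_gt (hF : F.Finite) (hx : g ≤ x) (hxF : ∀ f ∈ F, g < f → x < f) :
    ∃ y ∈ gap F g, x < y := by
  obtain ⟨y, hxy, hy⟩ := exists_gt_forall_lt_of_finite (hF.subset (sep_subset F (g < ·)))
    fun f hf => hxF f hf.1 hf.2
  exact ⟨y, ⟨hx.trans_lt hxy, fun f hf hgf => hy f ⟨hf, hgf⟩⟩, hxy⟩

lemma nonempty_gap (hF : F.Finite) : Nonempty (gap F g) :=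
  let ⟨y, hy, _⟩ := exists_mem_gap_gt hF le_rfl fun _ _ h => h
  ⟨⟨y, hy⟩⟩

lemma noMaxOrder_gap (hF : F.Finite) : NoMaxOrder (gap F g) :=
  ⟨fun x => let ⟨y, hy, hxy⟩ := exists_mem_gap_gt hF x.2.1.le x.2.2; ⟨⟨y, hy⟩, hxy⟩⟩

theorem nonempty_orderIso_gap [Countable α] {F' : Set α} {g' : α} (hF : F.Finite)
    (hF' : F'.Finite) : Nonempty (gap F g ≃o gap F' g') := by
  have := nonempty_gap (g := g) hF
  have := nonempty_gap (g := g') hF'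
  have := noMaxOrder_gap (g := g) hF
  have := noMaxOrder_gap (g := g') hF'
  exact Order.iso_of_countable_dense _ _

end DenseGaps

end Gaps

section Decomposition

variable {α : Type*} [LinearOrder α] {F : Set α}

def gapPart (F : Set α) (g : α) (B : Set α) : Set (gap F g) := (↑) ⁻¹' B

lemma gapPart_nonempty_iff {g : α} {B : Set α} :
    (gapPart F g B).Nonempty ↔ (B ∩ gap F g).Nonempty :=
  ⟨fun ⟨x, hx⟩ => ⟨x, hx, x.2⟩, fun ⟨x, hxB, hx⟩ => ⟨⟨x, hx⟩, hxB⟩⟩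

lemma exists_finite_preimage_eq_and_gapPart_eq (hF : F.Finite) (T : Set F)
    (D : ∀ g : F, Set (gap F g)) (hD : ∀ g, (D g).Finite) :
    ∃ B : Set α, B.Finite ∧ (↑) ⁻¹' B = T ∧ ∀ g : F, gapPart F g B = D g := by
  have := hF.to_subtype
  refine ⟨(↑) '' T ∪ ⋃ g, (↑) '' D g, T.toFinite.image _ |>.union <|
    finite_iUnion fun g => (hD g).image _, ?_, fun g => ?_⟩
  · ext x
    simp only [mem_preimage, mem_union, mem_image, Subtype.val_inj, exists_eq_right, mem_iUnion]
    exact or_iff_left fun ⟨_, y, _, hy⟩ => notMem_of_mem_gap (hy ▸ y.2) x.2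
  · ext x
    simp only [gapPart, mem_preimage, mem_union, mem_image, mem_iUnion]
    constructor
    · rintro (⟨y, -, hy⟩ | ⟨h, y, hy, hyx⟩)
      · exact absurd (hy ▸ y.2) (notMem_of_mem_gap x.2)
      · obtain rfl : h = g := Subtype.ext <|
          eq_of_mem_gap_of_mem_gap h.2 g.2 (hyx ▸ y.2) x.2
        rwa [← Subtype.ext hyx]
    · exact fun hx => Or.inr ⟨g, x, hx, rfl⟩

variable [OrderBot α] (hF : F.Finite) (h0 : ⊥ ∈ F)
include hF h0

lemma subset_iff_preimage_subset_and_gapPart_subset {B C : Set α} :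
    B ⊆ C ↔ ((↑) ⁻¹' B : Set F) ⊆ (↑) ⁻¹' C ∧ ∀ g : F, gapPart F g B ⊆ gapPart F g C := by
  refine ⟨fun h => ⟨fun _ hx => h hx, fun _ _ hx => h hx⟩, fun ⟨htrace, hgap⟩ x hx => ?_⟩
  obtain ⟨g, hg, rfl | hxg⟩ := exists_mem_block hF h0 x
  exacts [htrace (a := ⟨x, hg⟩) hx, hgap ⟨g, hg⟩ (a := ⟨x, hxg⟩) hx]

lemma exists_lt_iff_blocks {B C : Set α} :
    (∃ a ∈ B, ∃ b ∈ C, a < b) ↔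
      (∃ g h : F, g < h ∧ (B ∩ block F g).Nonempty ∧ (C ∩ block F h).Nonempty) ∨
      (∃ g : F, ↑g ∈ B ∧ (gapPart F g C).Nonempty) ∨
      ∃ g : F, ∃ a ∈ gapPart F g B, ∃ b ∈ gapPart F g C, a < b := by
  constructor
  · rintro ⟨a, ha, b, hb, hab⟩
    obtain ⟨g, hg, hag⟩ := exists_mem_block hF h0 a
    obtain ⟨h, hh, hbh⟩ := exists_mem_block hF h0 b
    rcases (le_of_mem_block_of_lt hg hag hbh hab).lt_or_eq with hgh | rfl
    · exact Or.inl ⟨⟨g, hg⟩, ⟨h, hh⟩, hgh, ⟨a, ha, hag⟩, ⟨b, hb, hbh⟩⟩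
    have hb' : b ∈ gap F g := hbh.resolve_left ((le_of_mem_block hag).trans_lt hab).ne'
    rcases hag with rfl | ha'
    · exact Or.inr (Or.inl ⟨⟨a, hg⟩, ha, ⟨b, hb'⟩, hb⟩)
    · exact Or.inr (Or.inr ⟨⟨g, hg⟩, ⟨a, ha'⟩, ha, ⟨b, hb'⟩, hb, hab⟩)
  · rintro (⟨g, h, hgh, ⟨a, ha, hag⟩, ⟨b, hb, hbh⟩⟩ | ⟨g, hg, ⟨b, hb⟩⟩ | ⟨g, a, ha, b, hb, hab⟩)
    · exact ⟨a, ha, b, hb, (lt_of_mem_block hag h.2 hgh).trans_le (le_of_mem_block hbh)⟩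
    · exact ⟨g, hg, b, hb, b.2.1⟩
    · exact ⟨a, ha, b, hb, hab⟩

end Decomposition

section Colors

structure AtomicType (ι : Type*) where
  sub : ι → ι → Prop
  lt : ι → ι → Prop
  empty : ι → Prop

instance {ι : Type*} [Finite ι] : Finite (AtomicType ι) :=
  Finite.of_injective (fun t => (t.sub, t.lt, t.empty)) fun ⟨_, _, _⟩ ⟨_, _, _⟩ h => by
    cases h; rfl

def Color (α : Type u) : ℕ → ℕ → Type u
  | 0, k => AtomicType (α ⊕ Fin k)
  | r + 1, k => AtomicType (α ⊕ Fin k) × Set (Color α r (k + 1))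

instance Color.finite {α : Type u} [Finite α] : ∀ r k, Finite (Color α r k)
  | 0, _ => inferInstanceAs (Finite (AtomicType _))
  | r + 1, k =>
    have := Color.finite (α := α) r (k + 1)
    inferInstanceAs (Finite (AtomicType _ × Set _))

variable {α : Type u} {γ δ : Type*} [LinearOrder γ] [LinearOrder δ]

def Color.atomic : ∀ {r k : ℕ}, Color α r k → AtomicType (α ⊕ Fin k)
  | 0, _, c => c
  | _ + 1, _, c => c.1

def Color.extensions {r k : ℕ} (c : Color α (r + 1) k) : Set (Color α r (k + 1)) := c.2

def atomicType {ι : Type*} (b : ι → Set γ) : AtomicType ι where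
  sub i j := b i ⊆ b j
  lt i j := ∃ x ∈ b i, ∃ y ∈ b j, x < y
  empty i := b i = ∅

/-- A finite stand-in for the rank-`r` Ehrenfeucht–Fraïssé type of `(v, xs)` in `WSO(γ)`. -/
def color : (r : ℕ) → {k : ℕ} → (α → Set γ) → (Fin k → Set γ) → Color α r k
  | 0, _, v, xs => atomicType (Sum.elim v xs)
  | r + 1, _, v, xs =>
    (atomicType (Sum.elim v xs), {c | ∃ D : Set γ, D.Finite ∧ color r v (Fin.snoc xs D) = c})

lemma color_atomic (r : ℕ) {k : ℕ} (v : α → Set γ) (xs : Fin k → Set γ) :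
    (color r v xs).atomic = atomicType (Sum.elim v xs) := by
  cases r <;> rfl

lemma atomicType_image_orderIso (e : γ ≃o δ) {ι : Type*} (b : ι → Set γ) :
    atomicType (fun i => e '' b i) = atomicType b := by
  simp only [atomicType, image_subset_image_iff e.injective, mem_image, image_eq_empty,
    exists_exists_and_eq_and, e.lt_iff_lt]

lemma color_image_orderIso (e : γ ≃o δ) (r : ℕ) {k : ℕ} (v : α → Set γ) (xs : Fin k → Set γ) :
    color r (fun a => e '' v a) (fun j => e '' xs j) = color r v xs := by
  have hatomic : ∀ {k} (xs : Fin k → Set γ),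
      atomicType (Sum.elim (fun a => e '' v a) fun j => e '' xs j) = atomicType (Sum.elim v xs) :=
    fun xs => by
      rw [← atomicType_image_orderIso e (Sum.elim v xs)]
      congr 1
      ext (_ | _) <;> rfl
  induction r generalizing k with
  | zero => exact hatomic xs
  | succ r ih =>
    refine Prod.ext (hatomic xs) (Set.ext fun c => ⟨?_, ?_⟩)
    · rintro ⟨D, hD, rfl⟩
      refine ⟨e ⁻¹' D, hD.preimage e.injective.injOn, ?_⟩
      rw [← ih]
      congr 1
      conv_rhs => rw [← image_preimage_eq D e.surjective]
      exact Fin.comp_snoc (e '' ·) xs _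
    · rintro ⟨D, hD, rfl⟩
      refine ⟨e '' D, hD.image e, ?_⟩
      rw [← ih]
      exact congrArg _ (Fin.comp_snoc (e '' ·) xs D).symm

end Colors

section Formulas

variable {β γ : Type*} [LinearOrder γ] {v : β → Set γ} {x y : β}

def subsetFormula (x y : β) : LMO.Formula β :=
  Relations.formula₂ (L := LMO) MORel.sub (var x) (var y)

def eltFormula (x y : β) : LMO.Formula β :=
  Relations.formula₂ (L := LMO) MORel.elt (var x) (var y)

def emptyFormula (x : β) : LMO.Formula β :=
  Formula.iAlls Unit (subsetFormula (Sum.inl x) (Sum.inr ()))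

def univFormula (x : β) : LMO.Formula β :=
  Formula.iAlls Unit (subsetFormula (Sum.inr ()) (Sum.inl x))

def singletonFormula (x : β) : LMO.Formula β :=
  ∼(emptyFormula x) ⊓ Formula.iAlls Unit ((subsetFormula (Sum.inr ()) (Sum.inl x)).imp
    (emptyFormula (Sum.inr ()) ⊔ subsetFormula (Sum.inl x) (Sum.inr ())))

@[simp] lemma realize_subsetFormula : (subsetFormula x y).Realize v ↔ v x ⊆ v y :=
  Formula.realize_rel₂

@[simp] lemma realize_eltFormula :
    (eltFormula x y).Realize v ↔ ∃ a ∈ v x, ∃ b ∈ v y, a < b :=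
  Formula.realize_rel₂

@[simp] lemma realize_emptyFormula : (emptyFormula x).Realize v ↔ v x = ∅ := by
  simp only [emptyFormula, Formula.realize_iAlls, realize_subsetFormula, Sum.elim_inl,
    Sum.elim_inr]
  exact ⟨fun h => subset_empty_iff.1 (h fun _ => ∅), fun h _ => h ▸ empty_subset _⟩

@[simp] lemma realize_univFormula : (univFormula x).Realize v ↔ v x = univ := by
  simp only [univFormula, Formula.realize_iAlls, realize_subsetFormula, Sum.elim_inl,
    Sum.elim_inr]
  exact ⟨fun h => univ_subset_iff.1 (h fun _ => univ), fun h _ => h ▸ subset_univ _⟩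

@[simp] lemma realize_singletonFormula : (singletonFormula x).Realize v ↔ ∃ a, v x = {a} := by
  simp only [singletonFormula, Formula.realize_inf, Formula.realize_not, Formula.realize_iAlls,
    Formula.realize_imp, Formula.realize_sup, realize_emptyFormula, realize_subsetFormula,
    Sum.elim_inl, Sum.elim_inr]
  constructor
  · rintro ⟨hne, h⟩
    obtain ⟨a, ha⟩ := nonempty_iff_ne_empty.2 hne
    refine ⟨a, ((h fun _ => {a}) (singleton_subset_iff.2 ha)).elim
      (fun h => (singleton_ne_empty a h).elim) fun h => h.antisymm (singleton_subset_iff.2 ha)⟩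
  · rintro ⟨a, ha⟩
    refine ⟨ha ▸ singleton_ne_empty a, fun w hw => ?_⟩
    rw [ha] at hw ⊢
    exact (subset_singleton_iff_eq.1 hw).imp id ge_of_eq

def existsPoints (κ : Type*) [Finite κ] (φ : LMO.Formula (β ⊕ κ)) : LMO.Formula β :=
  Formula.iExs κ (Formula.iInf (fun i => singletonFormula (Sum.inr i)) ⊓ φ)

def forallPoints (κ : Type*) [Finite κ] (φ : LMO.Formula (β ⊕ κ)) : LMO.Formula β :=
  Formula.iAlls κ ((Formula.iInf fun i => singletonFormula (Sum.inr i)).imp φ)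

variable {κ : Type*} [Finite κ] {φ : LMO.Formula (β ⊕ κ)}

@[simp] lemma realize_existsPoints :
    (existsPoints κ φ).Realize v ↔ ∃ p : κ → γ, φ.Realize (Sum.elim v fun i => {p i}) := by
  simp only [existsPoints, Formula.realize_iExs, Formula.realize_inf, Formula.realize_iInf,
    realize_singletonFormula, Sum.elim_inr]
  constructor
  · rintro ⟨w, hw, hφ⟩
    choose p hp using hw
    exact ⟨p, funext hp ▸ hφ⟩
  · exact fun ⟨p, hφ⟩ => ⟨_, fun i => ⟨p i, rfl⟩, hφ⟩

@[simp] lemma realize_forallPoints :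
    (forallPoints κ φ).Realize v ↔ ∀ p : κ → γ, φ.Realize (Sum.elim v fun i => {p i}) := by
  simp only [forallPoints, Formula.realize_iAlls, Formula.realize_imp, Formula.realize_iInf,
    realize_singletonFormula, Sum.elim_inr]
  constructor
  · exact fun h p => h _ fun i => ⟨p i, rfl⟩
  · intro h w hw
    choose p hp using hw
    exact funext hp ▸ h p

@[simp] lemma realize_existsPoints_unit {φ : LMO.Formula (β ⊕ Unit)} :
    (existsPoints Unit φ).Realize v ↔ ∃ a, φ.Realize (Sum.elim v fun _ => {a}) :=
  realize_existsPoints.trans ⟨fun ⟨p, h⟩ => ⟨p (), h⟩, fun ⟨a, h⟩ => ⟨fun _ => a, h⟩⟩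

@[simp] lemma realize_forallPoints_unit {φ : LMO.Formula (β ⊕ Unit)} :
    (forallPoints Unit φ).Realize v ↔ ∀ a, φ.Realize (Sum.elim v fun _ => {a}) :=
  realize_forallPoints.trans ⟨fun h a => h fun _ => a, fun h p => h (p ())⟩

end Formulas

section Encoding

variable {α : Type u} (F : Set II) (r : ℕ) {k : ℕ}

def gapColor (v : α → FinSub) (xs : Fin k → FinSub) (g : F) : Color α r k :=
  color r (fun a => gapPart F g (v a).1) (fun j => gapPart F g (xs j).1)

def colorClass (v : α → FinSub) (xs : Fin k → FinSub) (c : Color α r k) : Set F :=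
  {g | gapColor F r v xs g = c}

def msoAssignment (v : α → FinSub) (xs : Fin k → FinSub) :
    (α ⊕ Fin k) ⊕ Color α r k → Set F :=
  Sum.elim (fun i => (↑) ⁻¹' (Sum.elim v xs i).1) (colorClass F r v xs)

variable {F r} {v : α → FinSub} {xs : Fin k → FinSub}

@[simp] lemma mem_colorClass {c : Color α r k} {g : F} :
    g ∈ colorClass F r v xs c ↔ gapColor F r v xs g = c := Iff.rfl

@[simp] lemma msoAssignment_inl (i : α ⊕ Fin k) :
    msoAssignment F r v xs (Sum.inl i) = (↑) ⁻¹' (Sum.elim v xs i).1 := rfl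

@[simp] lemma msoAssignment_inr (c : Color α r k) :
    msoAssignment F r v xs (Sum.inr c) = colorClass F r v xs c := rfl

lemma gapColor_atomic (g : F) :
    (gapColor F r v xs g).atomic = atomicType fun i => gapPart F g (Sum.elim v xs i).1 := by
  rw [gapColor, color_atomic]
  congr 1
  ext (_ | _) <;> rfl

lemma forall_colorClass_eq_empty_iff (P : Color α r k → Prop) :
    (∀ c : {c // ¬ P c}, colorClass F r v xs c = ∅) ↔ ∀ g, P (gapColor F r v xs g) :=
  ⟨fun h g => by_contra fun hg => (h ⟨_, hg⟩).subset (rfl : g ∈ colorClass F r v xs _),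
    fun h c => eq_empty_of_forall_notMem fun g hg => c.2 (hg ▸ h g)⟩

lemma exists_mem_colorClass_iff (P : Color α r k → Prop) {g : F} :
    (∃ c : {c // P c}, g ∈ colorClass F r v xs c) ↔ P (gapColor F r v xs g) :=
  ⟨fun ⟨c, hc⟩ => hc ▸ c.2, fun h => ⟨⟨_, h⟩, rfl⟩⟩

section Points

variable [Finite α] {κ : Type*} {p : κ → F}

def gapMeets (r : ℕ) (i : α ⊕ Fin k) (z : κ) : LMO.Formula (((α ⊕ Fin k) ⊕ Color α r k) ⊕ κ) :=
  Formula.iSup fun c : {c : Color α r k // ¬ c.atomic.empty i} =>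
    subsetFormula (Sum.inr z) (Sum.inl (Sum.inr c.1))

def blockMeets (r : ℕ) (i : α ⊕ Fin k) (z : κ) :
    LMO.Formula (((α ⊕ Fin k) ⊕ Color α r k) ⊕ κ) :=
  subsetFormula (Sum.inr z) (Sum.inl (Sum.inl i)) ⊔ gapMeets r i z

lemma realize_gapMeets {i : α ⊕ Fin k} {z : κ} :
    (gapMeets r i z).Realize (Sum.elim (msoAssignment F r v xs) fun z => {p z}) ↔
      (gapPart F (p z) (Sum.elim v xs i).1).Nonempty := by
  simp only [gapMeets, Formula.realize_iSup, realize_subsetFormula, Sum.elim_inl, Sum.elim_inr,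
    msoAssignment_inr, singleton_subset_iff, exists_mem_colorClass_iff, gapColor_atomic]
  exact nonempty_iff_ne_empty.symm

lemma realize_blockMeets {i : α ⊕ Fin k} {z : κ} :
    (blockMeets r i z).Realize (Sum.elim (msoAssignment F r v xs) fun z => {p z}) ↔
      ((Sum.elim v xs i).1 ∩ block F (p z)).Nonempty := by
  rw [blockMeets, Formula.realize_sup, realize_gapMeets, inter_block_nonempty_iff,
    gapPart_nonempty_iff]
  simp

end Points

end Encoding

section AtomicFormulas

variable {α : Type u} [Finite α] {F : Set II} {r k : ℕ} {v : α → FinSub} {xs : Fin k → FinSub}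

def subsetMSO (r : ℕ) (i j : α ⊕ Fin k) : LMO.Formula ((α ⊕ Fin k) ⊕ Color α r k) :=
  subsetFormula (Sum.inl i) (Sum.inl j) ⊓
    Formula.iInf fun c : {c : Color α r k // ¬ c.atomic.sub i j} => emptyFormula (Sum.inr c.1)

def eltMSO (r : ℕ) (i j : α ⊕ Fin k) : LMO.Formula ((α ⊕ Fin k) ⊕ Color α r k) :=
  existsPoints (Fin 2)
      (blockMeets r i 0 ⊓ blockMeets r j 1 ⊓ eltFormula (Sum.inr 0) (Sum.inr 1)) ⊔
    existsPoints Unit (subsetFormula (Sum.inr ()) (Sum.inl (Sum.inl i)) ⊓ gapMeets r j ()) ⊔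
    existsPoints Unit (Formula.iSup fun c : {c : Color α r k // c.atomic.lt i j} =>
      subsetFormula (Sum.inr ()) (Sum.inl (Sum.inr c.1)))

variable (hF : F.Finite) (h0 : ⊥ ∈ F)
include hF h0

lemma realize_subsetMSO {i j : α ⊕ Fin k} :
    (subsetMSO r i j).Realize (msoAssignment F r v xs) ↔
      (Sum.elim v xs i).1 ⊆ (Sum.elim v xs j).1 := by
  rw [subset_iff_preimage_subset_and_gapPart_subset hF h0, subsetMSO, Formula.realize_inf,
    Formula.realize_iInf]
  simp only [realize_subsetFormula, realize_emptyFormula, msoAssignment_inl,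
    msoAssignment_inr, forall_colorClass_eq_empty_iff, gapColor_atomic]
  rfl

lemma realize_eltMSO {i j : α ⊕ Fin k} :
    (eltMSO r i j).Realize (msoAssignment F r v xs) ↔
      ∃ a ∈ (Sum.elim v xs i).1, ∃ b ∈ (Sum.elim v xs j).1, a < b := by
  rw [exists_lt_iff_blocks hF h0]
  simp only [eltMSO, Formula.realize_sup, realize_existsPoints_unit]
  simp only [Formula.realize_inf, realize_existsPoints, realize_blockMeets, realize_gapMeets,
    realize_eltFormula, realize_subsetFormula, Formula.realize_iSup, Sum.elim_inl, Sum.elim_inr,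
    mem_singleton_iff, exists_eq_left, singleton_subset_iff, msoAssignment_inl, msoAssignment_inr,
    mem_preimage, exists_mem_colorClass_iff, gapColor_atomic]
  rw [or_assoc]
  refine or_congr ⟨?_, ?_⟩ (or_congr ?_ ?_)
  · rintro ⟨p, ⟨hi, hj⟩, hlt⟩
    exact ⟨p 0, p 1, hlt, hi, hj⟩
  · rintro ⟨g, h, hgh, hi, hj⟩
    exact ⟨![g, h], ⟨hi, hj⟩, hgh⟩
  · rfl
  · rfl

end AtomicFormulas

section Extensions

variable {α : Type u} {F : Set II} {r k : ℕ} {v : α → FinSub} {xs : Fin k → FinSub}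

variable (F r) in
def extensionAssignment (v : α → FinSub) (xs : Fin k → FinSub) (B : FinSub) :
    Option (Color α r (k + 1)) → Set F :=
  fun o => o.elim ((↑) ⁻¹' B.1) (colorClass F r v (Fin.snoc xs B))

variable (α r k) in
def snocVar : (α ⊕ Fin (k + 1)) ⊕ Color α r (k + 1) →
    ((α ⊕ Fin k) ⊕ Color α (r + 1) k) ⊕ Option (Color α r (k + 1)) :=
  Sum.elim (Sum.elim (Sum.inl ∘ Sum.inl ∘ Sum.inl)
      (Fin.lastCases (Sum.inr none) (Sum.inl ∘ Sum.inl ∘ Sum.inr)))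
    (Sum.inr ∘ some)

lemma gapColor_snoc (B : FinSub) (g : F) :
    gapColor F r v (Fin.snoc xs B) g = color r (fun a => gapPart F g (v a).1)
      (Fin.snoc (fun j => gapPart F g (xs j).1) (gapPart F g B.1)) :=
  congrArg _ (Fin.comp_snoc (fun B : FinSub => gapPart F g B.1) xs B)

lemma gapColor_snoc_mem_extensions (B : FinSub) (g : F) :
    gapColor F r v (Fin.snoc xs B) g ∈ (gapColor F (r + 1) v xs g).extensions :=
  ⟨_, B.2.preimage Subtype.val_injective.injOn, (gapColor_snoc B g).symm⟩

lemma msoAssignment_snoc (B : FinSub) :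
    Sum.elim (msoAssignment F (r + 1) v xs) (extensionAssignment F r v xs B) ∘ snocVar α r k =
      msoAssignment F r v (Fin.snoc xs B) := by
  ext ((a | j) | c) : 1
  · rfl
  · induction j using Fin.lastCases <;> simp [snocVar, extensionAssignment]
  · rfl

lemma exists_extensionAssignment_eq_iff (hF : F.Finite) (w : Option (Color α r (k + 1)) → Set F) :
    (∃ B, extensionAssignment F r v xs B = w) ↔
      ∀ g : F, ∃ c ∈ (gapColor F (r + 1) v xs g).extensions, ∀ c', g ∈ w (some c') ↔ c' = c := by
  constructor
  · rintro ⟨B, rfl⟩ g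
    exact ⟨_, gapColor_snoc_mem_extensions B g, fun c' => eq_comm⟩
  · intro h
    choose c hc hw using h
    choose D hD hDc using hc
    obtain ⟨B, hB, htrace, hgap⟩ := exists_finite_preimage_eq_and_gapPart_eq hF (w none) D hD
    refine ⟨⟨B, hB⟩, funext fun o => ?_⟩
    cases o with
    | none => exact htrace
    | some c' =>
      ext g
      show gapColor F r v (Fin.snoc xs ⟨B, hB⟩) g = c' ↔ g ∈ w (some c')
      rw [hw, ← hDc, ← hgap, gapColor_snoc]
      exact eq_comm

end Extensions

section Quantifier

variable {α : Type u} [Finite α] {F : Set II} {r k : ℕ} {v : α → FinSub} {xs : Fin k → FinSub}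

variable (α r k) in
def extensionMSO :
    LMO.Formula (((α ⊕ Fin k) ⊕ Color α (r + 1) k) ⊕ Option (Color α r (k + 1))) :=
  forallPoints Unit <| Formula.iSup fun p : {p : Color α (r + 1) k × Color α r (k + 1) //
      p.2 ∈ p.1.extensions} =>
    subsetFormula (Sum.inr ()) (Sum.inl (Sum.inl (Sum.inr p.1.1))) ⊓
      subsetFormula (Sum.inr ()) (Sum.inl (Sum.inr (some p.1.2))) ⊓
      Formula.iInf fun c : {c // c ≠ p.1.2} =>
        ∼(subsetFormula (Sum.inr ()) (Sum.inl (Sum.inr (some c.1))))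

def allMSO (ψ : LMO.Formula ((α ⊕ Fin (k + 1)) ⊕ Color α r (k + 1))) :
    LMO.Formula ((α ⊕ Fin k) ⊕ Color α (r + 1) k) :=
  Formula.iAlls (Option (Color α r (k + 1))) ((extensionMSO α r k).imp (ψ.relabel (snocVar α r k)))

lemma realize_extensionMSO {w : Option (Color α r (k + 1)) → Set F} :
    (extensionMSO α r k).Realize (Sum.elim (msoAssignment F (r + 1) v xs) w) ↔
      ∀ g : F, ∃ c ∈ (gapColor F (r + 1) v xs g).extensions, ∀ c', g ∈ w (some c') ↔ c' = c := by
  simp only [extensionMSO, realize_forallPoints_unit, Formula.realize_iSup, Formula.realize_inf,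
    Formula.realize_iInf, Formula.realize_not, realize_subsetFormula, Sum.elim_inl, Sum.elim_inr,
    msoAssignment_inr, singleton_subset_iff, mem_colorClass]
  refine forall_congr' fun g => ⟨?_, ?_⟩
  · rintro ⟨⟨⟨d, c⟩, hc⟩, ⟨rfl, hg⟩, hne⟩
    exact ⟨c, hc, fun c' => ⟨fun hc' => by_contra fun h => hne ⟨c', h⟩ hc', fun h => h ▸ hg⟩⟩
  · rintro ⟨c, hc, h⟩
    exact ⟨⟨(_, c), hc⟩, ⟨rfl, (h c).2 rfl⟩, fun c' hc' => c'.2 ((h c').1 hc')⟩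

lemma realize_allMSO (hF : F.Finite) {ψ : LMO.Formula ((α ⊕ Fin (k + 1)) ⊕ Color α r (k + 1))} :
    (allMSO ψ).Realize (msoAssignment F (r + 1) v xs) ↔
      ∀ B : FinSub, ψ.Realize (msoAssignment F r v (Fin.snoc xs B)) := by
  simp only [allMSO, Formula.realize_iAlls, Formula.realize_imp, realize_extensionMSO,
    ← exists_extensionAssignment_eq_iff hF, Formula.realize_relabel, forall_exists_index]
  rw [forall_comm]
  simp only [forall_eq']
  exact forall_congr' fun B => by rw [← msoAssignment_snoc]

end Quantifier

section Composition

def quantifierRank {L : Language} {β : Type*} : ∀ {n : ℕ}, L.BoundedFormula β n → ℕ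
  | _, .falsum => 0
  | _, .equal _ _ => 0
  | _, .rel _ _ => 0
  | _, .imp φ ψ => max (quantifierRank φ) (quantifierRank ψ)
  | _, .all φ => quantifierRank φ + 1

lemma LMO.term_eq_var {β : Type*} (t : LMO.Term β) : ∃ i, t = var i := by
  cases t with
  | var i => exact ⟨i, rfl⟩
  | func f _ => exact (f : Empty).elim

lemma LMO.exists_eq_vecCons_var {β : Type*} (ts : Fin 2 → LMO.Term β) :
    ∃ i j, ts = ![var i, var j] := by
  obtain ⟨i, hi⟩ := LMO.term_eq_var (ts 0)
  obtain ⟨j, hj⟩ := LMO.term_eq_var (ts 1)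
  exact ⟨i, j, by ext m; fin_cases m <;> assumption⟩

theorem exists_msoFormula {α : Type u} [Finite α] {k : ℕ} (φ : LMO.BoundedFormula α k) (r : ℕ)
    (hr : quantifierRank φ ≤ r) :
    ∃ ψ : LMO.Formula ((α ⊕ Fin k) ⊕ Color α r k), ∀ F : Set II, F.Finite → ⊥ ∈ F →
      ∀ (v : α → FinSub) (xs : Fin k → FinSub),
        φ.Realize v xs ↔ ψ.Realize (msoAssignment F r v xs) := by
  induction φ generalizing r with
  | falsum => exact ⟨⊥, fun _ _ _ _ _ => Iff.rfl⟩
  | equal t₁ t₂ =>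
    obtain ⟨i, rfl⟩ := LMO.term_eq_var t₁
    obtain ⟨j, rfl⟩ := LMO.term_eq_var t₂
    refine ⟨subsetMSO r i j ⊓ subsetMSO r j i, fun F hF h0 v xs => ?_⟩
    rw [Formula.realize_inf, realize_subsetMSO hF h0, realize_subsetMSO hF h0,
      ← Set.Subset.antisymm_iff, ← Subtype.ext_iff]
    rfl
  | rel R ts =>
    cases R <;> obtain ⟨i, j, rfl⟩ := LMO.exists_eq_vecCons_var ts
    · exact ⟨subsetMSO r i j, fun F hF h0 v xs => (realize_subsetMSO hF h0).symm⟩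
    · exact ⟨eltMSO r i j, fun F hF h0 v xs => (realize_eltMSO hF h0).symm⟩
  | imp φ₁ φ₂ ih₁ ih₂ =>
    obtain ⟨ψ₁, h₁⟩ := ih₁ r (le_of_max_le_left hr)
    obtain ⟨ψ₂, h₂⟩ := ih₂ r (le_of_max_le_right hr)
    exact ⟨ψ₁.imp ψ₂, fun F hF h0 v xs => imp_congr (h₁ F hF h0 v xs) (h₂ F hF h0 v xs)⟩
  | all φ ih =>
    obtain _ | r := r
    · exact absurd hr (Nat.not_succ_le_zero _)
    obtain ⟨ψ, hψ⟩ := ih r (Nat.le_of_succ_le_succ hr)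
    refine ⟨allMSO ψ, fun F hF h0 v xs => ?_⟩
    rw [BoundedFormula.realize_all, realize_allMSO hF]
    exact forall_congr' fun B => hψ F hF h0 v _

end Composition

section FloorSet

/-- `gap {0} 0 = (0, ∞)` serves as the reference gap: by Cantor's isomorphism theorem every gap
of a finite set is isomorphic to it. -/
def emptyColor (α : Type u) (r : ℕ) : Color α r 0 :=
  color r (γ := gap ({0} : Set II) 0) (fun _ : α => ∅) Fin.elim0

lemma gapColor_eq_emptyColor {α : Type u} {F : Set II} (hF : F.Finite) (r : ℕ)
    {v : α → FinSub} (hv : ∀ a, (v a).1 ⊆ F) (xs : Fin 0 → FinSub) (g : F) :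
    gapColor F r v xs g = emptyColor α r := by
  obtain ⟨e⟩ := nonempty_orderIso_gap (g := (g : II)) (g' := 0) hF (finite_singleton (0 : II))
  have hv' : ∀ a, gapPart F g (v a).1 = ∅ := fun a =>
    eq_empty_of_forall_notMem fun x hx => notMem_of_mem_gap x.2 (hv a hx)
  calc gapColor F r v xs g = color r (fun _ : α => (∅ : Set (gap F g))) Fin.elim0 := by
        simp only [gapColor, hv']
        exact congrArg _ (funext fun j => j.elim0)
    _ = emptyColor α r := by
        rw [← color_image_orderIso e, emptyColor]
        simp only [image_empty]
        exact congrArg _ (funext fun j => j.elim0)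

lemma finite_floorSet {n : ℕ} (A : Fin n → FinSub) : (floorSet A).Finite :=
  (finite_singleton 0).union (finite_iUnion fun i => (A i).2)

lemma subset_floorSet {n : ℕ} (A : Fin n → FinSub) (i : Fin n) : (A i).1 ⊆ floorSet A :=
  subset_union_of_subset_right (subset_iUnion (fun i => (A i).1) i) _

lemma msoAssignment_floorSet {n : ℕ} (A : Fin n → FinSub) (r : ℕ)
    [DecidableEq (Color (Fin n) r 0)] (xs : Fin 0 → FinSub) (w : Bool → Set (floorSet A))
    (hu : w true = univ) (he : w false = ∅) :
    Sum.elim (fun i => (↑) ⁻¹' (A i).1) w ∘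
        Sum.map (Sum.elim id Fin.elim0) (fun c => decide (c = emptyColor (Fin n) r)) =
      msoAssignment (floorSet A) r A xs := by
  ext ((i | j) | c) : 1
  · rfl
  · exact j.elim0
  · ext g
    simp only [Function.comp_apply, Sum.map_inr, Sum.elim_inr, msoAssignment_inr, mem_colorClass,
      gapColor_eq_emptyColor (finite_floorSet A) r (subset_floorSet A)]
    by_cases hc : c = emptyColor (Fin n) r <;> simp [hc, hu, he, eq_comm]

end FloorSet

end

/-- For every `L_MO`-formula `φ(X₁,…,Xₙ)` there exists an `L_MO`-formula
`ψ(X₁,…,Xₙ)` such that for every tuple `Ā` of finite subsets of `𝕀`: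
`WSO(𝕀) ⊨ φ(Ā)` iff `MSO(⌊Ā⌋) ⊨ ψ(Ā)`, where `⌊Ā⌋ = {0} ∪ A₁ ∪ … ∪ Aₙ` is viewed as a finite
suborder of `𝕀` and `MSO(⌊Ā⌋)` is the `L_MO`-structure on its powerset. -/
theorem feferman_vaught_WSO (n : ℕ) (φ : LMO.Formula (Fin n)) :
    ∃ ψ : LMO.Formula (Fin n),
      ∀ A : Fin n → FinSub,
        φ.Realize A ↔
          ψ.Realize (fun i => ({x : ↥(floorSet A) | (x : II) ∈ (A i).1} :
            Set ↥(floorSet A))) := by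
  classical
  obtain ⟨ψ, hψ⟩ := exists_msoFormula φ (quantifierRank φ) le_rfl
  refine ⟨Formula.iExs Bool (univFormula (Sum.inr true) ⊓ emptyFormula (Sum.inr false) ⊓
    ψ.relabel (Sum.map (Sum.elim id Fin.elim0)
      fun c => decide (c = emptyColor (Fin n) (quantifierRank φ)))), fun A => ?_⟩
  refine (hψ _ (finite_floorSet A) (Or.inl rfl) A _).trans ?_
  simp only [Formula.realize_iExs, Formula.realize_inf, realize_univFormula,
    realize_emptyFormula, Formula.realize_relabel, Sum.elim_inr]
  exact ⟨fun h => ⟨fun b => bif b then univ else ∅, ⟨rfl, rfl⟩,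
      (msoAssignment_floorSet A _ _ (fun b => bif b then univ else ∅) rfl rfl).symm ▸ h⟩,
    fun ⟨w, ⟨hu, he⟩, h⟩ => msoAssignment_floorSet A _ _ w hu he ▸ h⟩

end MCpaper
end

section
/- There is an existential L_L-formula φ(X,Y,Z) such that for all finite subsets A, B, C of 𝕀: L(𝕀) ⊨ φ(A,B,C) if and only if 𝔰⁻¹(A,B) = C. -/
namespace MCpaper

open FirstOrder Language Structure Set

universe u v

/-!
Witnesses for `𝔰⁻¹(A, B) = C` are finite unions of intervals. For each `i ∈ C` with successor
`j` in `A`, pick `m` strictly between them and put `[i, m]` into `Y` and `[m, j]` into `Z`.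
The operations `l` and `r` read off the points `i`, `m`, `j`, and the equations
`Y ∩ A = l(Y)`, `l(Z) = r(Y)`, `Z ∩ A = r(Z)`, `l(Z) ∩ A = ⊥` force `j` to be the successor
of `i` in `A`, so `r(Z) ⊆ B` gives `C ⊆ 𝔰⁻¹(A, B)`. A second such pair starting at every
non-maximal point of `A` outside `C`, with all right ends outside `B`, gives the converse.
-/

section Gaps

variable {α ι : Type*} [LinearOrder α] {T : Set ι} {f : ι → α} {x : α}

lemma exists_lt_forall_le_of_finite (hT : T.Finite) {x₀ : α} (hx₀ : x₀ < x)
    (hf : ∀ j ∈ T, f j < x) : ∃ x' < x, ∀ j ∈ T, f j ≤ x' := by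
  rcases T.eq_empty_or_nonempty with rfl | hne
  · exact ⟨x₀, hx₀, fun j hj => hj.elim⟩
  · obtain ⟨j₀, hj₀, hmax⟩ := Set.exists_max_image T f hT hne
    exact ⟨f j₀, hf j₀ hj₀, hmax⟩

lemma exists_gt_forall_le_of_finite [NoMaxOrder α] (hT : T.Finite) (hf : ∀ j ∈ T, x < f j) :
    ∃ x' > x, ∀ j ∈ T, x' ≤ f j := by
  obtain ⟨x₀, hx₀⟩ := exists_gt x
  exact exists_lt_forall_le_of_finite (α := αᵒᵈ) hT hx₀ hf

end Gaps

section Successor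

variable {α : Type*} [LinearOrder α] {A : Set α} {i j k x : α}

def IsSuccIn (A : Set α) (i j : α) : Prop :=
  i ∈ A ∧ j ∈ A ∧ i < j ∧ ∀ k ∈ A, i < k → j ≤ k

lemma mem_sInvSet_iff {B : Set α} : i ∈ sInvSet A B ↔ ∃ j, IsSuccIn A i j ∧ j ∈ B := by
  simp only [sInvSet, IsSuccIn, mem_ofPred_eq]
  constructor
  · rintro ⟨hi, j, hj, hij, hmin, hjB⟩
    exact ⟨j, ⟨hi, hj, hij, hmin⟩, hjB⟩
  · rintro ⟨j, ⟨hi, hj, hij, hmin⟩, hjB⟩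
    exact ⟨hi, j, hj, hij, hmin, hjB⟩

lemma IsSuccIn.unique (h : IsSuccIn A i j) (h' : IsSuccIn A i k) : j = k :=
  le_antisymm (h.2.2.2 k h'.2.1 h'.2.2.1) (h'.2.2.2 j h.2.1 h.2.2.1)

lemma IsSuccIn.notMem (h : IsSuccIn A i j) (hix : i < x) (hxj : x < j) : x ∉ A :=
  fun hx => (h.2.2.2 x hx hix).not_gt hxj

lemma IsSuccIn.Icc_inter_eq_left (h : IsSuccIn A i j) (hix : i ≤ x) (hxj : x < j) :
    Icc i x ∩ A = {i} := by
  refine Subset.antisymm (fun y ⟨hy, hyA⟩ => ?_) (singleton_subset_iff.2 ⟨⟨le_rfl, hix⟩, h.1⟩)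
  by_contra hyi
  exact h.notMem (hy.1.lt_of_ne (Ne.symm hyi)) (hy.2.trans_lt hxj) hyA

lemma IsSuccIn.Icc_inter_eq_right (h : IsSuccIn A i j) (hix : i < x) (hxj : x ≤ j) :
    Icc x j ∩ A = {j} := by
  refine Subset.antisymm (fun y ⟨hy, hyA⟩ => ?_) (singleton_subset_iff.2 ⟨⟨hxj, le_rfl⟩, h.2.1⟩)
  by_contra hyj
  exact h.notMem (hix.trans_le hy.1) (hy.2.lt_of_ne hyj) hyA

lemma exists_isSuccIn_of_finite (hA : A.Finite) (hi : i ∈ A) (hk : k ∈ A) (hik : i < k) :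
    ∃ j, IsSuccIn A i j := by
  obtain ⟨j, ⟨hj, hij⟩, hmin⟩ :=
    Set.exists_min_image {k ∈ A | i < k} id (hA.sep _) ⟨k, hk, hik⟩
  exact ⟨j, hi, hj, hij, fun k hk hik => hmin k ⟨hk, hik⟩⟩

lemma pairwise_le_or_le_of_isSuccIn {P : Set (α × α)} (hP : ∀ k ∈ P, IsSuccIn A k.1 k.2) :
    P.Pairwise fun k k' => k.2 ≤ k'.1 ∨ k'.2 ≤ k.1 := by
  intro k hk k' hk' hne
  rcases lt_trichotomy k.1 k'.1 with hlt | heq | hgt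
  · exact Or.inl ((hP k hk).2.2.2 _ (hP k' hk').1 hlt)
  · exact absurd (Prod.ext heq ((hP k hk).unique (heq ▸ hP k' hk'))) hne
  · exact Or.inr ((hP k' hk').2.2.2 _ (hP k hk).1 hgt)

end Successor

section Endpoints

variable {Y : Set II} {i k : II}

lemma notMem_lSet_of_Icc_subset (h : Icc i k ⊆ Y) (hik : i < k) : k ∉ lSet Y := by
  rintro ⟨-, rfl | ⟨k', hk', hgap⟩⟩
  · exact (zero_le : (0 : II) ≤ i).not_gt hik
  · obtain ⟨x, hx1, hx2⟩ := exists_between (max_lt hk' hik)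
    have hx : x ∈ Ioo k' k ∩ Y :=
      ⟨⟨(le_max_left _ _).trans_lt hx1, hx2⟩, h ⟨(le_max_right _ _).trans hx1.le, hx2.le⟩⟩
    rwa [hgap] at hx

lemma notMem_rSet_of_Icc_subset (h : Icc i k ⊆ Y) (hik : i < k) : i ∉ rSet Y := by
  rintro ⟨-, i', hi', hgap⟩
  obtain ⟨x, hx1, hx2⟩ := exists_between (lt_min hi' hik)
  have hx : x ∈ Ioo i i' ∩ Y :=
    ⟨⟨hx1, hx2.trans_le (min_le_left _ _)⟩, h ⟨hx1.le, (hx2.trans_le (min_le_right _ _)).le⟩⟩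
  rwa [hgap] at hx

lemma isFCI_Icc (a b : II) : IsFCI (Icc a b) :=
  ⟨1, fun _ => Icc a b, fun _ => Or.inl ⟨a, b, rfl⟩, (iUnion_const _).symm⟩

variable {ι : Type*} {P : Set ι} {p q : ι → II}

lemma isFCI_biUnion_Icc (hP : P.Finite) : IsFCI (⋃ k ∈ P, Icc (p k) (q k)) := by
  induction P, hP using Set.Finite.induction_on with
  | empty => simpa using isFCI_empty
  | insert _ _ ih =>
    rw [biUnion_insert]
    exact (isFCI_Icc _ _).union ih

lemma biUnion_Icc_inter_eq_image {S : Set II} {g : ι → II}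
    (hg : ∀ k ∈ P, Icc (p k) (q k) ∩ S = {g k}) : (⋃ k ∈ P, Icc (p k) (q k)) ∩ S = g '' P := by
  rw [iUnion₂_inter, image_eq_iUnion]
  exact iUnion₂_congr hg

lemma maxSet_biUnion_Icc_eq_empty (hP : P.Finite) (hpq : ∀ k ∈ P, p k ≤ q k)
    (h : maxSet (⋃ k ∈ P, Icc (p k) (q k)) = ∅) : ⋃ k ∈ P, Icc (p k) (q k) = ∅ := by
  rcases P.eq_empty_or_nonempty with rfl | hne
  · simp
  obtain ⟨k₀, hk₀, hmax⟩ := Set.exists_max_image P q hP hne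
  have : q k₀ ∈ maxSet (⋃ k ∈ P, Icc (p k) (q k)) := by
    refine ⟨mem_biUnion hk₀ ⟨hpq k₀ hk₀, le_rfl⟩, fun y hy => ?_⟩
    obtain ⟨k, hk, hyk⟩ := mem_iUnion₂.1 hy
    exact hyk.2.trans (hmax k hk)
  rw [h] at this
  exact this.elim

lemma Icc_subset_biUnion_Icc {k : ι} (hk : k ∈ P) : Icc (p k) (q k) ⊆ ⋃ k ∈ P, Icc (p k) (q k) :=
  subset_biUnion_of_mem (u := fun k => Icc (p k) (q k)) hk

variable (hP : P.Finite) (hpq : ∀ k ∈ P, p k ≤ q k)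
  (hsep : P.Pairwise fun k k' => q k < p k' ∨ q k' < p k)
include hP hpq hsep

lemma lSet_biUnion_Icc : lSet (⋃ k ∈ P, Icc (p k) (q k)) = p '' P := by
  ext x
  constructor
  · rintro ⟨hx, hgap⟩
    obtain ⟨k, hk, hxk⟩ := mem_iUnion₂.1 hx
    rcases hxk.1.eq_or_lt with h | h
    · exact ⟨k, hk, h⟩
    · exact (notMem_lSet_of_Icc_subset
        ((Icc_subset_Icc_right hxk.2).trans (Icc_subset_biUnion_Icc hk)) h ⟨hx, hgap⟩).elim
  · rintro ⟨k, hk, rfl⟩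
    refine ⟨mem_biUnion hk ⟨le_rfl, hpq k hk⟩, ?_⟩
    rcases (zero_le : (0 : II) ≤ p k).eq_or_lt with h | h
    · exact Or.inl h.symm
    obtain ⟨x', hx', hle⟩ :=
      exists_lt_forall_le_of_finite (hP.sep fun j => q j < p k) h fun j hj => hj.2
    refine Or.inr ⟨x', hx', eq_empty_of_forall_notMem fun y ⟨⟨hx'y, hyk⟩, hy⟩ => ?_⟩
    obtain ⟨j, hj, hyj⟩ := mem_iUnion₂.1 hy
    by_cases hjk : q j < p k
    · exact (hyj.2.trans (hle j ⟨hj, hjk⟩)).not_gt hx'y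
    · have : p k ≤ p j := by
        rcases eq_or_ne k j with rfl | hne
        · exact le_rfl
        · exact ((hsep hk hj hne).resolve_right hjk).le.trans' (hpq k hk)
      exact (this.trans hyj.1).not_gt hyk

lemma rSet_biUnion_Icc : rSet (⋃ k ∈ P, Icc (p k) (q k)) = q '' P := by
  ext x
  constructor
  · rintro ⟨hx, hgap⟩
    obtain ⟨k, hk, hxk⟩ := mem_iUnion₂.1 hx
    rcases hxk.2.eq_or_lt with h | h
    · exact ⟨k, hk, h.symm⟩
    · exact (notMem_rSet_of_Icc_subset
        ((Icc_subset_Icc_left hxk.1).trans (Icc_subset_biUnion_Icc hk)) h ⟨hx, hgap⟩).elim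
  · rintro ⟨k, hk, rfl⟩
    refine ⟨mem_biUnion hk ⟨hpq k hk, le_rfl⟩, ?_⟩
    obtain ⟨x', hx', hle⟩ :=
      exists_gt_forall_le_of_finite (hP.sep fun j => q k < p j) fun j hj => hj.2
    refine ⟨x', hx', eq_empty_of_forall_notMem fun y ⟨⟨hky, hyx'⟩, hy⟩ => ?_⟩
    obtain ⟨j, hj, hyj⟩ := mem_iUnion₂.1 hy
    by_cases hkj : q k < p j
    · exact ((hle j ⟨hj, hkj⟩).trans hyj.1).not_gt hyx'
    · have : q j ≤ q k := by
        rcases eq_or_ne k j with rfl | hne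
        · exact le_rfl
        · exact ((hsep hk hj hne).resolve_left hkj).le.trans (hpq k hk)
      exact (hyj.2.trans this).not_gt hky

end Endpoints

section Components

variable {Y : Set II} {i : II}

lemma IsFCI.exists_biUnion_Icc (hY : IsFCI Y) (hb : BddAbove Y) :
    ∃ T : Set (II × II), T.Finite ∧ Y = ⋃ ab ∈ T, Icc ab.1 ab.2 := by
  obtain ⟨n, f, hf, rfl⟩ := hY
  obtain ⟨u, hu⟩ := hb
  have hIcc : ∀ m, ∃ ab : II × II, f m = Icc ab.1 ab.2 := by
    intro m
    rcases hf m with ⟨a, b, hab⟩ | ⟨a, ha⟩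
    · exact ⟨(a, b), hab⟩
    · have : max a (u + 1) ∈ ⋃ m, f m := mem_iUnion.2 ⟨m, ha ▸ mem_Ici.2 (le_max_left _ _)⟩
      exact ((le_max_right _ _).trans (hu this)).not_gt (lt_add_one u) |>.elim
  choose ab hab using hIcc
  exact ⟨range ab, finite_range ab, by rw [biUnion_range]; exact iUnion_congr hab⟩

lemma exists_mem_rSet_biUnion_Icc {T : Set (II × II)} (hT : T.Finite)
    (hi : i ∈ ⋃ ab ∈ T, Icc ab.1 ab.2) :
    ∃ m, i ≤ m ∧ Icc i m ⊆ ⋃ ab ∈ T, Icc ab.1 ab.2 ∧ m ∈ rSet (⋃ ab ∈ T, Icc ab.1 ab.2) := by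
  set U := ⋃ ab ∈ T, Icc ab.1 ab.2
  obtain ⟨ab, hab, hiab⟩ := mem_iUnion₂.1 hi
  -- `m` is the largest right end of an interval reached from `i` inside `U`.
  obtain ⟨cd, ⟨hcd, him, hIm⟩, hmax⟩ := Set.exists_max_image
    {cd ∈ T | i ≤ cd.2 ∧ Icc i cd.2 ⊆ U} Prod.snd (hT.sep _)
    ⟨ab, hab, hiab.2, (Icc_subset_Icc_left hiab.1).trans (Icc_subset_biUnion_Icc hab)⟩
  refine ⟨cd.2, him, hIm, hIm ⟨him, le_rfl⟩, ?_⟩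
  obtain ⟨m', hm', hle⟩ :=
    exists_gt_forall_le_of_finite (hT.sep fun ef => cd.2 < ef.1) fun ef h => h.2
  refine ⟨m', hm', eq_empty_of_forall_notMem fun y ⟨⟨hmy, hym'⟩, hy⟩ => ?_⟩
  obtain ⟨ef, hef, hyef⟩ := mem_iUnion₂.1 hy
  rcases lt_or_ge cd.2 ef.1 with h | h
  · exact ((hle ef ⟨hef, h⟩).trans hyef.1).not_gt hym'
  · have hIef : Icc i ef.2 ⊆ U := fun x hx => by
      rcases le_or_gt x cd.2 with hx' | hx'
      · exact hIm ⟨hx.1, hx'⟩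
      · exact Icc_subset_biUnion_Icc hef ⟨h.trans hx'.le, hx.2⟩
    exact (hmax ef ⟨hef, him.trans (hmy.le.trans hyef.2), hIef⟩).not_gt (hmy.trans_le hyef.2)

lemma IsFCI.exists_mem_rSet (hY : IsFCI Y) (hb : BddAbove Y) (hi : i ∈ Y) :
    ∃ m, i ≤ m ∧ Icc i m ⊆ Y ∧ m ∈ rSet Y := by
  obtain ⟨T, hT, rfl⟩ := hY.exists_biUnion_Icc hb
  exact exists_mem_rSet_biUnion_Icc hT hi

lemma bddAbove_of_maxSet_eq_empty (h : maxSet Y = ∅ → Y = ∅) : BddAbove Y := by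
  rcases Y.eq_empty_or_nonempty with rfl | hne
  · exact bddAbove_empty
  · obtain ⟨m, hm⟩ := nonempty_iff_ne_empty.2 fun h' => hne.ne_empty (h h')
    exact ⟨m, hm.2⟩

end Components

/-- `maxSet Y = ∅ → Y = ∅` says that `Y` is bounded, so that every interval of `Y` has a
right end. -/
def Bridges (A Y Z : Set II) : Prop :=
  Y ∩ A = lSet Y ∧ lSet Z = rSet Y ∧ Z ∩ A = rSet Z ∧ Disjoint (lSet Z) A ∧
    (maxSet Y = ∅ → Y = ∅) ∧ (maxSet Z = ∅ → Z = ∅)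

section Bridges

variable {A Y Z : Set II}

lemma Bridges.exists_isSuccIn (hY : IsFCI Y) (hZ : IsFCI Z) (h : Bridges A Y Z) {i : II}
    (hi : i ∈ lSet Y) : ∃ j ∈ rSet Z, IsSuccIn A i j := by
  obtain ⟨hYA, hlZ, hZA, hdisj, hbY, hbZ⟩ := h
  have hiA : i ∈ A := (hYA.ge hi).2
  obtain ⟨m, him, hIm, hm⟩ := hY.exists_mem_rSet (bddAbove_of_maxSet_eq_empty hbY) hi.1
  have hmZ : m ∈ lSet Z := hlZ.ge hm
  have hmA : m ∉ A := hdisj.notMem_of_mem_left hmZ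
  obtain ⟨j, hmj, hIj, hj⟩ := hZ.exists_mem_rSet (bddAbove_of_maxSet_eq_empty hbZ) hmZ.1
  have hjA : j ∈ A := (hZA.ge hj).2
  have him' : i < m := him.lt_of_ne fun h => hmA (h ▸ hiA)
  have hmj' : m < j := hmj.lt_of_ne fun h => hmA (h ▸ hjA)
  refine ⟨j, hj, hiA, hjA, him'.trans hmj', fun k hkA hik => not_lt.1 fun hkj => ?_⟩
  rcases le_or_gt k m with hkm | hmk
  · exact notMem_lSet_of_Icc_subset ((Icc_subset_Icc_right hkm).trans hIm) hik
      (hYA.le ⟨hIm ⟨hik.le, hkm⟩, hkA⟩)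
  · exact notMem_rSet_of_Icc_subset ((Icc_subset_Icc_left hmk.le).trans hIj) hkj
      (hZA.le ⟨hIj ⟨hmk.le, hkj.le⟩, hkA⟩)

lemma exists_bridges (hA : A.Finite) {F : Set II} (hF : ∀ i ∈ F, ∃ j, IsSuccIn A i j) :
    ∃ Y Z, IsFCI Y ∧ IsFCI Z ∧ Bridges A Y Z ∧ lSet Y = F ∧
      ∀ j ∈ rSet Z, ∃ i ∈ F, IsSuccIn A i j := by
  set P := {k : II × II | k.1 ∈ F ∧ IsSuccIn A k.1 k.2}
  have hPsucc : ∀ k ∈ P, IsSuccIn A k.1 k.2 := fun k hk => hk.2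
  have hP : P.Finite := (hA.prod hA).subset fun k hk => ⟨hk.2.1, hk.2.2.1⟩
  set mid : II × II → II := fun k => (k.1 + k.2) / 2
  have hmid : ∀ k ∈ P, k.1 < mid k ∧ mid k < k.2 := fun k hk =>
    ⟨left_lt_add_div_two.2 (hPsucc k hk).2.2.1, add_div_two_lt_right.2 (hPsucc k hk).2.2.1⟩
  have hsep := pairwise_le_or_le_of_isSuccIn hPsucc
  have hsepY : P.Pairwise fun k k' => mid k < k'.1 ∨ mid k' < k.1 := fun k hk k' hk' hne =>
    (hsep hk hk' hne).imp ((hmid k hk).2.trans_le) ((hmid k' hk').2.trans_le)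
  have hsepZ : P.Pairwise fun k k' => k.2 < mid k' ∨ k'.2 < mid k := fun k hk k' hk' hne =>
    (hsep hk hk' hne).imp (·.trans_lt (hmid k' hk').1) (·.trans_lt (hmid k hk).1)
  have hpqY : ∀ k ∈ P, k.1 ≤ mid k := fun k hk => (hmid k hk).1.le
  have hpqZ : ∀ k ∈ P, mid k ≤ k.2 := fun k hk => (hmid k hk).2.le
  have hfst : Prod.fst '' P = F := by
    refine Subset.antisymm (fun _ ⟨k, hk, hki⟩ => hki ▸ hk.1) fun i hi => ?_
    obtain ⟨j, hij⟩ := hF i hi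
    exact ⟨(i, j), ⟨hi, hij⟩, rfl⟩
  refine ⟨⋃ k ∈ P, Icc k.1 (mid k), ⋃ k ∈ P, Icc (mid k) k.2, isFCI_biUnion_Icc hP,
    isFCI_biUnion_Icc hP, ⟨?_, ?_, ?_, ?_, maxSet_biUnion_Icc_eq_empty hP hpqY,
    maxSet_biUnion_Icc_eq_empty hP hpqZ⟩, ?_, ?_⟩
  · rw [lSet_biUnion_Icc hP hpqY hsepY, biUnion_Icc_inter_eq_image fun k hk =>
      (hPsucc k hk).Icc_inter_eq_left (hpqY k hk) (hmid k hk).2]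
  · rw [lSet_biUnion_Icc hP hpqZ hsepZ, rSet_biUnion_Icc hP hpqY hsepY]
  · rw [rSet_biUnion_Icc hP hpqZ hsepZ, biUnion_Icc_inter_eq_image fun k hk =>
      (hPsucc k hk).Icc_inter_eq_right (hmid k hk).1 (hpqZ k hk)]
  · rw [lSet_biUnion_Icc hP hpqZ hsepZ, disjoint_left]
    rintro _ ⟨k, hk, rfl⟩
    exact (hPsucc k hk).notMem (hmid k hk).1 (hmid k hk).2
  · rw [lSet_biUnion_Icc hP hpqY hsepY, hfst]
  · rw [rSet_biUnion_Icc hP hpqZ hsepZ]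
    rintro _ ⟨k, hk, rfl⟩
    exact ⟨k.1, hk.1, hk.2⟩

end Bridges

def IsSInvWitness (A B C Y Z Y' Z' : Set II) : Prop :=
  Bridges A Y Z ∧ lSet Y = C ∧ rSet Z ⊆ B ∧
    Bridges A Y' Z' ∧ A ⊆ lSet Y' ∪ (C ∪ maxSet A) ∧ Disjoint (rSet Z') B

section Witness

variable {A B C Y Z Y' Z' : Set II}

lemma IsSInvWitness.sInvSet_eq (hY : IsFCI Y) (hZ : IsFCI Z) (hY' : IsFCI Y')
    (hZ' : IsFCI Z') (h : IsSInvWitness A B C Y Z Y' Z') : sInvSet A B = C := by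
  obtain ⟨hb, hlY, hZB, hb', hcover, hZ'B⟩ := h
  ext i
  rw [mem_sInvSet_iff]
  constructor
  · rintro ⟨j, hij, hjB⟩
    by_contra hiC
    have hiY' : i ∈ lSet Y' := by
      rcases hcover hij.1 with h | h | h
      · exact h
      · exact absurd h hiC
      · exact absurd (h.2 j hij.2.1) (not_le.2 hij.2.2.1)
    obtain ⟨j', hj', hij'⟩ := hb'.exists_isSuccIn hY' hZ' hiY'
    exact hZ'B.notMem_of_mem_left hj' (hij.unique hij' ▸ hjB)
  · intro hi
    obtain ⟨j, hj, hij⟩ := hb.exists_isSuccIn hY hZ (hlY ▸ hi)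
    exact ⟨j, hij, hZB hj⟩

lemma exists_isSInvWitness (hA : A.Finite) :
    ∃ Y Z Y' Z', IsFCI Y ∧ IsFCI Z ∧ IsFCI Y' ∧ IsFCI Z' ∧
      IsSInvWitness A B (sInvSet A B) Y Z Y' Z' := by
  obtain ⟨Y, Z, hY, hZ, hb, hlY, hrZ⟩ := exists_bridges hA (F := sInvSet A B)
    fun i hi => (mem_sInvSet_iff.1 hi).imp fun _ => And.left
  obtain ⟨Y', Z', hY', hZ', hb', hlY', hrZ'⟩ := exists_bridges hA
    (F := {i | i ∉ sInvSet A B ∧ ∃ j, IsSuccIn A i j}) fun i hi => hi.2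
  refine ⟨Y, Z, Y', Z', hY, hZ, hY', hZ', hb, hlY, fun j hj => ?_, hb', fun i hi => ?_,
    disjoint_left.2 fun j hj hjB => ?_⟩
  · obtain ⟨i, hi, hij⟩ := hrZ j hj
    obtain ⟨j', hij', hj'B⟩ := mem_sInvSet_iff.1 hi
    exact hij.unique hij' ▸ hj'B
  · by_cases hC : i ∈ sInvSet A B
    · exact Or.inr (Or.inl hC)
    by_cases hmax : ∃ k ∈ A, i < k
    · obtain ⟨k, hk, hik⟩ := hmax
      exact Or.inl (hlY' ▸ ⟨hC, exists_isSuccIn_of_finite hA hi hk hik⟩)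
    · push Not at hmax
      exact Or.inr (Or.inr ⟨hi, hmax⟩)
  · obtain ⟨i, ⟨hiC, -⟩, hij⟩ := hrZ' j hj
    exact hiC (mem_sInvSet_iff.2 ⟨j, hij, hjB⟩)

end Witness

section Formulas

variable {β α : Type*} {n : ℕ}

def unionT (t s : LL.Term β) : LL.Term β := Term.func LLFunc.union ![t, s]
def interT (t s : LL.Term β) : LL.Term β := Term.func LLFunc.inter ![t, s]
def botT : LL.Term β := Term.func LLFunc.bot ![]
def maxT (t : LL.Term β) : LL.Term β := Term.func LLFunc.max ![t]
def leftT (t : LL.Term β) : LL.Term β := Term.func LLFunc.left ![t]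
def rightT (t : LL.Term β) : LL.Term β := Term.func LLFunc.right ![t]

section Realize

variable (v : β → FCI) (t s : LL.Term β)

@[simp] lemma realize_unionT : ((unionT t s).realize v).1 = (t.realize v).1 ∪ (s.realize v).1 :=
  rfl
@[simp] lemma realize_interT : ((interT t s).realize v).1 = (t.realize v).1 ∩ (s.realize v).1 :=
  rfl
@[simp] lemma realize_botT : ((botT : LL.Term β).realize v).1 = ∅ := rfl
@[simp] lemma realize_maxT : ((maxT t).realize v).1 = maxSet (t.realize v).1 := rfl
@[simp] lemma realize_leftT : ((leftT t).realize v).1 = lSet (t.realize v).1 := rfl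
@[simp] lemma realize_rightT : ((rightT t).realize v).1 = rSet (t.realize v).1 := rfl

end Realize

def subsetF (t s : LL.Term (α ⊕ Fin n)) : LL.BoundedFormula α n := interT t s =' t
def disjointF (t s : LL.Term (α ⊕ Fin n)) : LL.BoundedFormula α n := interT t s =' botT
def bddF (t : LL.Term (α ⊕ Fin n)) : LL.BoundedFormula α n := (maxT t =' botT).imp (t =' botT)

def bridgesF (a y z : LL.Term (α ⊕ Fin n)) : LL.BoundedFormula α n :=
  interT y a =' leftT y ⊓ leftT z =' rightT y ⊓ interT z a =' rightT z ⊓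
    disjointF (leftT z) a ⊓ bddF y ⊓ bddF z

def sInvFormula : LL.BoundedFormula (Fin 3) 4 :=
  bridgesF (var (.inl 0)) &0 &1 ⊓ leftT &0 =' var (.inl 2) ⊓ subsetF (rightT &1) (var (.inl 1)) ⊓
    bridgesF (var (.inl 0)) &2 &3 ⊓
    subsetF (var (.inl 0)) (unionT (leftT &2) (unionT (var (.inl 2)) (maxT (var (.inl 0))))) ⊓
    disjointF (rightT &3) (var (.inl 1))

lemma isQF_bdEqual (t s : LL.Term (α ⊕ Fin n)) : (t =' s).IsQF :=
  (BoundedFormula.IsAtomic.equal t s).isQF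

lemma isQF_bddF (t : LL.Term (α ⊕ Fin n)) : (bddF t).IsQF :=
  (isQF_bdEqual _ _).imp (isQF_bdEqual _ _)

lemma isQF_bridgesF (a y z : LL.Term (α ⊕ Fin n)) : (bridgesF a y z).IsQF :=
  (((((isQF_bdEqual _ _).inf (isQF_bdEqual _ _)).inf (isQF_bdEqual _ _)).inf
    (isQF_bdEqual _ _)).inf (isQF_bddF y)).inf (isQF_bddF z)

lemma isQF_sInvFormula : sInvFormula.IsQF :=
  (((((isQF_bridgesF _ _ _).inf (isQF_bdEqual _ _)).inf (isQF_bdEqual _ _)).inf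
    (isQF_bridgesF _ _ _)).inf (isQF_bdEqual _ _)).inf (isQF_bdEqual _ _)

lemma realize_bridgesF (v : α → FCI) (xs : Fin n → FCI) (a y z : LL.Term (α ⊕ Fin n)) :
    (bridgesF a y z).Realize v xs ↔ Bridges (a.realize (Sum.elim v xs)).1
      (y.realize (Sum.elim v xs)).1 (z.realize (Sum.elim v xs)).1 := by
  simp only [bridgesF, disjointF, bddF, Bridges, BoundedFormula.realize_inf,
    BoundedFormula.realize_imp, BoundedFormula.realize_bdEqual, Subtype.ext_iff, realize_interT,
    realize_leftT, realize_rightT, realize_maxT, realize_botT, disjoint_iff_inter_eq_empty,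
    and_assoc]

lemma realize_sInvFormula (v : Fin 3 → FCI) (xs : Fin 4 → FCI) :
    sInvFormula.Realize v xs ↔
      IsSInvWitness (v 0) (v 1) (v 2) (xs 0) (xs 1) (xs 2) (xs 3) := by
  simp only [sInvFormula, subsetF, disjointF, IsSInvWitness, BoundedFormula.realize_inf,
    realize_bridgesF, BoundedFormula.realize_bdEqual, Subtype.ext_iff, realize_interT,
    realize_unionT, realize_leftT, realize_rightT, realize_maxT, realize_botT, Term.realize_var,
    Function.comp_apply, Sum.elim_inl, Sum.elim_inr, inter_eq_left, disjoint_iff_inter_eq_empty,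
    and_assoc]

end Formulas

lemma IsExist.exs {L : Language} {α : Type*} {n : ℕ} {φ : L.BoundedFormula α n}
    (h : IsExist φ) : IsExist φ.exs := by
  induction n with
  | zero => exact h
  | succ n ih => exact ih h.ex

/-- There is an existential `L_L`-formula `φ(X,Y,Z)` such that for all
finite subsets `A, B, C` of `𝕀`: `L(𝕀) ⊨ φ(A,B,C)` if and only if `𝔰⁻¹(A,B) = C`. -/
theorem sInv_existentially_definable :
    ∃ φ : LL.Formula (Fin 3), IsExist φ ∧
      ∀ (A B C : Set II) (hA : A.Finite) (hB : B.Finite) (hC : C.Finite),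
        (φ.Realize (![⟨A, finite_isFCI hA⟩, ⟨B, finite_isFCI hB⟩, ⟨C, finite_isFCI hC⟩] : Fin 3 → FCI) ↔
          sInvSet A B = C) := by
  refine ⟨sInvFormula.exs, (IsExist.of_isQF isQF_sInvFormula).exs, fun A B C hA _ _ => ?_⟩
  rw [BoundedFormula.realize_exs]
  simp only [realize_sInvFormula]
  constructor
  · rintro ⟨W, hW⟩
    exact hW.sInvSet_eq (W 0).2 (W 1).2 (W 2).2 (W 3).2
  · rintro rfl
    obtain ⟨Y, Z, Y', Z', hY, hZ, hY', hZ', hW⟩ := exists_isSInvWitness (B := B) hA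
    exact ⟨![⟨Y, hY⟩, ⟨Z, hZ⟩, ⟨Y', hY'⟩, ⟨Z', hZ'⟩], hW⟩

end MCpaper
end
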